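/- arXiv:0809.3460 — 3 statements merged into one kernel-verified Lean document; each statement's English description precedes it below -/
import Mathlib

section
/- The function f is antisymmetric with respect to permutations of its variables: for every permutation σ of {0,1,2,3} and all vectors v₀, v₁, v₂, v₃ ∈ ℂ², one has f(v_{σ(0)}, v_{σ(1)}, v_{σ(2)}, v_{σ(3)}) = sign(σ) · f(v₀, v₁, v₂, v₃). -/
/-- `det2 v w = v₁·w₂ − v₂·w₁`, the determinant of the 2×2 matrix with columns `v` and `w`. -/
noncomputable def det2 (v w : Fin 2 → ℂ) : ℂ := v 0 * w 1 - v 1 * w 0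

/-- `f(v₀,v₁,v₂,v₃) = Im( det(v₀,v₁)·det(v₂,v₃)·conj(det(v₀,v₃))·conj(det(v₁,v₂)) )`. -/
noncomputable def f4 (v₀ v₁ v₂ v₃ : Fin 2 → ℂ) : ℝ :=
  (det2 v₀ v₁ * det2 v₂ v₃ * (starRingEnd ℂ) (det2 v₀ v₃) *
    (starRingEnd ℂ) (det2 v₁ v₂)).im

lemma f4_swap01 (a b c d : Fin 2 → ℂ) : f4 b a c d = - f4 a b c d := by
  simp only [f4, det2, map_sub, map_mul, Complex.mul_im, Complex.mul_re,
    Complex.sub_re, Complex.sub_im, Complex.conj_re, Complex.conj_im, Complex.neg_im]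
  ring

lemma f4_swap12 (a b c d : Fin 2 → ℂ) : f4 a c b d = - f4 a b c d := by
  simp only [f4, det2, map_sub, map_mul, Complex.mul_im, Complex.mul_re,
    Complex.sub_re, Complex.sub_im, Complex.conj_re, Complex.conj_im, Complex.neg_im]
  ring

lemma f4_swap23 (a b c d : Fin 2 → ℂ) : f4 a b d c = - f4 a b c d := by
  simp only [f4, det2, map_sub, map_mul, Complex.mul_im, Complex.mul_re,
    Complex.sub_re, Complex.sub_im, Complex.conj_re, Complex.conj_im, Complex.neg_im]
  ring

lemma f4_swap02 (a b c d : Fin 2 → ℂ) : f4 c b a d = - f4 a b c d := by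
  rw [f4_swap01, f4_swap12, f4_swap01]; ring

lemma f4_swap13 (a b c d : Fin 2 → ℂ) : f4 a d c b = - f4 a b c d := by
  rw [f4_swap12, f4_swap23, f4_swap12]; ring

lemma f4_swap03 (a b c d : Fin 2 → ℂ) : f4 d b c a = - f4 a b c d := by
  rw [f4_swap01, f4_swap13, f4_swap01]; ring

lemma f4_swap (x y : Fin 4) (hxy : x ≠ y) (v : Fin 4 → Fin 2 → ℂ) :
    f4 (v (Equiv.swap x y 0)) (v (Equiv.swap x y 1)) (v (Equiv.swap x y 2))
      (v (Equiv.swap x y 3)) = - f4 (v 0) (v 1) (v 2) (v 3) := by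
  fin_cases x <;> fin_cases y <;> simp_all [Equiv.swap_apply_of_ne_of_ne] <;>
    first
      | exact f4_swap01 _ _ _ _
      | exact f4_swap02 _ _ _ _
      | exact f4_swap03 _ _ _ _
      | exact f4_swap12 _ _ _ _
      | exact f4_swap13 _ _ _ _
      | exact f4_swap23 _ _ _ _

/-- `f` is antisymmetric under permutations of its four arguments. -/
theorem f4_antisymm (σ : Equiv.Perm (Fin 4)) (v : Fin 4 → Fin 2 → ℂ) :
    f4 (v (σ 0)) (v (σ 1)) (v (σ 2)) (v (σ 3)) =
      ((Equiv.Perm.sign σ : ℤ) : ℝ) * f4 (v 0) (v 1) (v 2) (v 3) := by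
  have H : ∀ (τ : Equiv.Perm (Fin 4)) (w : Fin 4 → Fin 2 → ℂ),
      f4 (w (τ 0)) (w (τ 1)) (w (τ 2)) (w (τ 3)) =
        ((Equiv.Perm.sign τ : ℤ) : ℝ) * f4 (w 0) (w 1) (w 2) (w 3) := by
    intro τ
    refine Equiv.Perm.swap_induction_on τ ?_ ?_
    · intro w; simp
    · intro g x y hxy ih w
      have h1 : ∀ i, w ((Equiv.swap x y * g) i) = (fun j => w (Equiv.swap x y j)) (g i) :=
        fun i => rfl
      simp only [h1]
      rw [ih (fun j => w (Equiv.swap x y j))]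
      rw [f4_swap x y hxy w]
      simp [Equiv.Perm.sign_mul, Equiv.Perm.sign_swap hxy]
  exact H σ v
end

section
/- Let v₀, v₁, v₂, v₃ ∈ ℂ² be nonzero vectors that are pairwise linearly independent over ℂ. Then the integral ∫_{Δ³} Q_v(t)^{-2} dt₁ dt₂ dt₃ is finite; that is, the function (t₁,t₂,t₃) ↦ 1/Q_v(1−t₁−t₂−t₃, t₁, t₂, t₃)² is integrable with respect to Lebesgue measure on the set {(t₁,t₂,t₃) ∈ ℝ³ : t₁, t₂, t₃ ≥ 0, t₁+t₂+t₃ ≤ 1}. -/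
/-! Pairwise independence gives `c > 0` with `c ≤ |det(vᵢ, vⱼ)|²` for all `i ≠ j`, hence
`Q_v(t) ≥ c · t_k (1 - t_k)` for every `k`. Some barycentric coordinate has `t_k ≥ 1/4`, and
`1 - t_k` bounds the sup-distance from `p` to the `k`-th vertex, so
`Q_v⁻² ≤ 16 c⁻² ∑_k ‖p - vertex_k‖⁻²`, and each `‖x‖⁻²` is locally integrable in `ℝ³` since `2 < 3`. -/

open MeasureTheory

/-- `Q_v(t) = ∑_{i≠j} t_i t_j |det(v_i,v_j)|²`, sum over ordered pairs of distinct indices. -/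
noncomputable def Qform (v : Fin 4 → Fin 2 → ℂ) (t : Fin 4 → ℝ) : ℝ :=
  ∑ i : Fin 4, ∑ j : Fin 4,
    if i ≠ j then t i * t j * ‖det2 (v i) (v j)‖ ^ 2 else 0

/-- The parameter domain `{(t₁,t₂,t₃) : tᵢ ≥ 0, t₁+t₂+t₃ ≤ 1}` of the 3-simplex. -/
def simplexDom : Set (Fin 3 → ℝ) :=
  {p | (∀ i, 0 ≤ p i) ∧ p 0 + p 1 + p 2 ≤ 1}

/-- The point of the 3-simplex with coordinates `(1−t₁−t₂−t₃, t₁, t₂, t₃)`. -/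
noncomputable def tOf (p : Fin 3 → ℝ) : Fin 4 → ℝ :=
  ![1 - p 0 - p 1 - p 2, p 0, p 1, p 2]

theorem integrableOn_ball_inv_norm_sub_sq {E : Type*} [NormedAddCommGroup E] [NormedSpace ℝ E]
    [FiniteDimensional ℝ E] [MeasurableSpace E] [BorelSpace E] {μ : Measure E}
    [μ.IsAddHaarMeasure] (hE : 2 < Module.finrank ℝ E) (a : E) (r : ℝ) :
    IntegrableOn (fun x => (‖x - a‖ ^ 2)⁻¹) (Metric.ball a r) μ := by
  have h0 : IntegrableOn (fun x : E => (‖x‖ ^ 2)⁻¹) (Metric.ball 0 r) μ := by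
    refine integrableOn_ball_of_norm_le_rpow (C := 1) (α := 2) (by omega)
      (by exact_mod_cast hE) (ae_of_all _ fun x => ?_)
      (continuous_norm.pow 2).measurable.inv.aestronglyMeasurable
    rw [one_mul, Real.rpow_neg (norm_nonneg x), Real.norm_of_nonneg (by positivity)]
    norm_cast
  have hpre : (· - a) ⁻¹' Metric.ball 0 r = Metric.ball a r := by
    ext x
    simp [dist_eq_norm]
  rw [← hpre]
  exact ((measurePreserving_sub_right μ a).integrableOn_comp_preimage
    (measurableEmbedding_subRight a)).mpr h0

theorem det2_ne_zero_of_linearIndependent {a b : Fin 2 → ℂ}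
    (h : LinearIndependent ℂ ![a, b]) : det2 a b ≠ 0 := by
  have hrows : Matrix.of ![a, b] = !![a 0, a 1; b 0, b 1] := by
    ext i j; fin_cases i <;> fin_cases j <;> rfl
  have hunit : IsUnit (Matrix.of ![a, b]) := Matrix.linearIndependent_rows_iff_isUnit.mp h
  rw [Matrix.isUnit_iff_isUnit_det, hrows, Matrix.det_fin_two_of, isUnit_iff_ne_zero] at hunit
  exact hunit

theorem exists_pos_le_norm_det2_sq {v : Fin 4 → Fin 2 → ℂ}
    (hind : ∀ i j : Fin 4, i ≠ j → LinearIndependent ℂ ![v i, v j]) :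
    ∃ c > 0, ∀ i j : Fin 4, i ≠ j → c ≤ ‖det2 (v i) (v j)‖ ^ 2 := by
  obtain ⟨q, hq, hmin⟩ := Finset.univ.offDiag.exists_min_image
    (fun q : Fin 4 × Fin 4 => ‖det2 (v q.1) (v q.2)‖ ^ 2) ⟨(0, 1), by simp⟩
  have hq' : q.1 ≠ q.2 := (Finset.mem_offDiag.mp hq).2.2
  exact ⟨_, pow_pos (norm_pos_iff.mpr (det2_ne_zero_of_linearIndependent (hind _ _ hq'))) 2,
    fun i j hij => hmin (i, j) (by simpa using hij)⟩

theorem mul_mul_one_sub_le_Qform {v : Fin 4 → Fin 2 → ℂ} {t : Fin 4 → ℝ} {c : ℝ}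
    (hc : ∀ i j : Fin 4, i ≠ j → c ≤ ‖det2 (v i) (v j)‖ ^ 2)
    (ht : ∀ i, 0 ≤ t i) (hsum : ∑ i, t i = 1) (k : Fin 4) :
    c * (t k * (1 - t k)) ≤ Qform v t := by
  have hterm : ∀ i j, 0 ≤ if i ≠ j then t i * t j * ‖det2 (v i) (v j)‖ ^ 2 else 0 := by
    intro i j
    split_ifs
    exacts [mul_nonneg (mul_nonneg (ht i) (ht j)) (sq_nonneg _), le_rfl]
  calc c * (t k * (1 - t k))
      = ∑ j ∈ Finset.univ.erase k, c * (t k * t j) := by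
        rw [← Finset.mul_sum, ← Finset.mul_sum, Finset.sum_erase_eq_sub (Finset.mem_univ k), hsum]
    _ ≤ ∑ j ∈ Finset.univ.erase k, t k * t j * ‖det2 (v k) (v j)‖ ^ 2 :=
        Finset.sum_le_sum fun j hj => by
          rw [mul_comm]
          exact mul_le_mul_of_nonneg_left (hc k j (Finset.ne_of_mem_erase hj).symm)
            (mul_nonneg (ht k) (ht j))
    _ = ∑ j, if k ≠ j then t k * t j * ‖det2 (v k) (v j)‖ ^ 2 else 0 := by
        rw [Finset.sum_ite, Finset.sum_const_zero, add_zero]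
        congr 1
        ext j
        simp [eq_comm]
    _ ≤ Qform v t :=
        Finset.single_le_sum (f := fun i => ∑ j, if i ≠ j then _ else 0)
          (fun i _ => Finset.sum_nonneg fun j _ => hterm i j) (Finset.mem_univ k)

theorem continuous_Qform (v : Fin 4 → Fin 2 → ℂ) : Continuous (Qform v) := by
  unfold Qform
  refine continuous_finsetSum _ fun i _ => continuous_finsetSum _ fun j _ => ?_
  split_ifs
  exacts [by fun_prop, continuous_const]

theorem continuous_tOf : Continuous tOf := by
  unfold tOf
  fun_prop

theorem measurableSet_simplexDom : MeasurableSet simplexDom := by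
  unfold simplexDom
  measurability

theorem sum_tOf (p : Fin 3 → ℝ) : ∑ i, tOf p i = 1 := by
  simp only [tOf, Fin.sum_univ_four, Matrix.cons_val_zero, Matrix.cons_val_one, Matrix.cons_val]
  ring

theorem tOf_nonneg {p : Fin 3 → ℝ} (hp : p ∈ simplexDom) (i : Fin 4) : 0 ≤ tOf p i := by
  obtain ⟨hge, hsum⟩ := hp
  fin_cases i
  exacts [by show 0 ≤ 1 - p 0 - p 1 - p 2; linarith, hge 0, hge 1, hge 2]

/-- `tOf (simplexVertex k)` is the `k`-th vertex `eₖ` of `Δ³`. -/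
noncomputable def simplexVertex : Fin 4 → Fin 3 → ℝ :=
  ![0, Pi.single 0 1, Pi.single 1 1, Pi.single 2 1]

theorem tOf_le_one {p : Fin 3 → ℝ} (hp : p ∈ simplexDom) (k : Fin 4) : tOf p k ≤ 1 :=
  sum_tOf p ▸ Finset.single_le_sum (fun i _ => tOf_nonneg hp i) (Finset.mem_univ k)

theorem norm_sub_simplexVertex_le {p : Fin 3 → ℝ} (hp : p ∈ simplexDom) (k : Fin 4) :
    ‖p - simplexVertex k‖ ≤ 1 - tOf p k := by
  refine (pi_norm_le_iff_of_nonneg (sub_nonneg.mpr (tOf_le_one hp k))).mpr fun i => ?_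
  obtain ⟨hge, hsum⟩ := hp
  have h0 := hge 0
  have h1 := hge 1
  have h2 := hge 2
  rw [Real.norm_eq_abs, abs_le]
  fin_cases k <;> fin_cases i <;>
    simp only [simplexVertex, tOf, Fin.zero_eta, Fin.mk_one, Fin.reduceFinMk, Fin.isValue,
      Matrix.cons_val_zero, Matrix.cons_val_one, Matrix.cons_val, Pi.sub_apply, Pi.zero_apply,
      Pi.single_eq_same, ne_eq, Fin.reduceEq, one_ne_zero, zero_ne_one, not_false_eq_true,
      Pi.single_eq_of_ne, sub_zero, neg_sub] <;>
    constructor <;> linarith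

theorem exists_quarter_le_tOf (p : Fin 3 → ℝ) : ∃ k, 1 / 4 ≤ tOf p k := by
  obtain ⟨k, -, hk⟩ := Finset.exists_le_of_sum_le (f := fun _ => (1 / 4 : ℝ)) (g := tOf p)
    Finset.univ_nonempty (by simp [sum_tOf])
  exact ⟨k, hk⟩

theorem inv_Qform_tOf_sq_le {v : Fin 4 → Fin 2 → ℂ} {c : ℝ} (hc : 0 < c)
    (hcle : ∀ i j : Fin 4, i ≠ j → c ≤ ‖det2 (v i) (v j)‖ ^ 2) {p : Fin 3 → ℝ}
    (hp : p ∈ simplexDom) (hpv : p ∉ Set.range simplexVertex) :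
    (Qform v (tOf p) ^ 2)⁻¹ ≤ 16 / c ^ 2 * ∑ k, (‖p - simplexVertex k‖ ^ 2)⁻¹ := by
  obtain ⟨k, hk⟩ := exists_quarter_le_tOf p
  have hdist : 0 < ‖p - simplexVertex k‖ :=
    norm_pos_iff.mpr (sub_ne_zero.mpr fun h => hpv ⟨k, h.symm⟩)
  have hQ : c / 4 * ‖p - simplexVertex k‖ ≤ Qform v (tOf p) := by
    have hle := norm_sub_simplexVertex_le hp k
    calc c / 4 * ‖p - simplexVertex k‖ ≤ c * (1 / 4 * (1 - tOf p k)) := by nlinarith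
      _ ≤ c * (tOf p k * (1 - tOf p k)) := by gcongr; linarith
      _ ≤ Qform v (tOf p) := mul_mul_one_sub_le_Qform hcle (tOf_nonneg hp) (sum_tOf p) k
  calc (Qform v (tOf p) ^ 2)⁻¹ ≤ ((c / 4 * ‖p - simplexVertex k‖) ^ 2)⁻¹ :=
        inv_anti₀ (by positivity) (pow_le_pow_left₀ (by positivity) hQ 2)
    _ = 16 / c ^ 2 * (‖p - simplexVertex k‖ ^ 2)⁻¹ := by field_simp; ring
    _ ≤ 16 / c ^ 2 * ∑ k, (‖p - simplexVertex k‖ ^ 2)⁻¹ :=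
        mul_le_mul_of_nonneg_left
          (Finset.single_le_sum (f := fun j => (‖p - simplexVertex j‖ ^ 2)⁻¹)
            (fun j _ => by positivity) (Finset.mem_univ k)) (by positivity)

theorem simplexDom_subset_ball (k : Fin 4) : simplexDom ⊆ Metric.ball (simplexVertex k) 2 :=
  fun p hp => by
    rw [Metric.mem_ball, dist_eq_norm]
    linarith [norm_sub_simplexVertex_le hp k, tOf_nonneg hp k]

theorem integrable_inv_Qform_sq_general (v : Fin 4 → Fin 2 → ℂ)
    (hind : ∀ i j : Fin 4, i ≠ j → LinearIndependent ℂ ![v i, v j]) :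
    IntegrableOn (fun p => (Qform v (tOf p) ^ 2)⁻¹) simplexDom volume := by
  obtain ⟨c, hc, hcle⟩ := exists_pos_le_norm_det2_sq hind
  have hdom : IntegrableOn (fun p => 16 / c ^ 2 * ∑ k, (‖p - simplexVertex k‖ ^ 2)⁻¹)
      simplexDom volume :=
    (integrable_finsetSum _ fun k _ => (integrableOn_ball_inv_norm_sub_sq
      (by simp) (simplexVertex k) 2).mono_set (simplexDom_subset_ball k)).const_mul _
  have hvert : volume (Set.range simplexVertex) = 0 := (Set.finite_range _).measure_zero _
  have hmeas : Measurable fun p => (Qform v (tOf p) ^ 2)⁻¹ :=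
    (((continuous_Qform v).comp continuous_tOf).measurable.pow_const 2).inv
  refine hdom.mono' hmeas.aestronglyMeasurable ?_
  filter_upwards [ae_restrict_mem measurableSet_simplexDom,
    ae_restrict_of_ae (measure_eq_zero_iff_ae_notMem.mp hvert)] with p hp hpv
  rw [Real.norm_of_nonneg (by positivity)]
  exact inv_Qform_tOf_sq_le hc hcle hp hpv

/-- For nonzero, pairwise linearly independent vectors, `1/Q_v(t)²` is Lebesgue-integrable
over the standard 3-simplex. -/
theorem integrable_inv_Qform_sq (v : Fin 4 → Fin 2 → ℂ)
    (hv : ∀ i, v i ≠ 0)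
    (hind : ∀ i j : Fin 4, i ≠ j → LinearIndependent ℂ ![v i, v j]) :
    IntegrableOn (fun p => (Qform v (tOf p) ^ 2)⁻¹) simplexDom volume :=
  integrable_inv_Qform_sq_general v hind
end

section
/- Let v₀, v₁, v₂, v₃ ∈ ℂ² be nonzero vectors that are pairwise linearly independent over ℂ, and let g ∈ GL₂(ℂ). Set w_i = g·v_i for i = 0,…,3. Then f(w₀,w₁,w₂,w₃) · ∫_{Δ³} Q_w(t)^{-2} dt₁ dt₂ dt₃ = f(v₀,v₁,v₂,v₃) · ∫_{Δ³} Q_v(t)^{-2} dt₁ dt₂ dt₃. -/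
open MeasureTheory

/-- `∫_{Δ³} Q_v(t)^{-2} dt₁ dt₂ dt₃`. -/
noncomputable def Jint (v : Fin 4 → Fin 2 → ℂ) : ℝ :=
  ∫ p in simplexDom, (Qform v (tOf p) ^ 2)⁻¹

/-!
Every ingredient is built from the brackets `det(vᵢ, vⱼ)`, and a matrix `M` multiplies each of
them by `det M`. Hence `f` picks up the factor `|det M|⁴`, the quadratic form `Q` the factor
`|det M|²`, and the integral of `Q⁻²` the factor `|det M|⁻⁴`; for invertible `M` these cancel.
-/

section MatrixAction

open Matrix

variable (M : Matrix (Fin 2) (Fin 2) ℂ)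

lemma det2_mulVec (a b : Fin 2 → ℂ) : det2 (M *ᵥ a) (M *ᵥ b) = M.det * det2 a b := by
  simp only [det2, mulVec, det_fin_two, dotProduct, Fin.sum_univ_two]
  ring

lemma f4_mulVec (a b c d : Fin 2 → ℂ) :
    f4 (M *ᵥ a) (M *ᵥ b) (M *ᵥ c) (M *ᵥ d) = ‖M.det‖ ^ 4 * f4 a b c d := by
  have hscale : ∀ z : ℂ, M.det * M.det * (starRingEnd ℂ) M.det * (starRingEnd ℂ) M.det * z =
      ((‖M.det‖ ^ 4 : ℝ) : ℂ) * z := fun z => by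
    rw [show ‖M.det‖ ^ 4 = (‖M.det‖ ^ 2) ^ 2 by ring, Complex.ofReal_pow, Complex.ofReal_pow,
      ← Complex.mul_conj']
    ring
  simp only [f4, det2_mulVec, map_mul]
  rw [← Complex.im_ofReal_mul, ← hscale]
  congr 1
  ring

lemma Qform_mulVec (v : Fin 4 → Fin 2 → ℂ) (t : Fin 4 → ℝ) :
    Qform (fun i => M *ᵥ v i) t = ‖M.det‖ ^ 2 * Qform v t := by
  simp only [Qform, det2_mulVec, norm_mul, mul_pow, Finset.mul_sum, mul_ite, mul_zero]
  refine Finset.sum_congr rfl fun i _ => Finset.sum_congr rfl fun j _ => ?_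
  split_ifs <;> ring

lemma Jint_mulVec (v : Fin 4 → Fin 2 → ℂ) :
    Jint (fun i => M *ᵥ v i) = (‖M.det‖ ^ 4)⁻¹ * Jint v := by
  rw [Jint, Jint, ← integral_const_mul]
  congr 1 with p
  rw [Qform_mulVec, mul_pow, mul_inv, ← pow_mul]

end MatrixAction

theorem f4_mul_Jint_GL_invariant_general (v : Fin 4 → Fin 2 → ℂ)
    (g : GL (Fin 2) ℂ) (w : Fin 4 → Fin 2 → ℂ)
    (hw : ∀ i, w i = (g : Matrix (Fin 2) (Fin 2) ℂ).mulVec (v i)) :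
    f4 (w 0) (w 1) (w 2) (w 3) * Jint w = f4 (v 0) (v 1) (v 2) (v 3) * Jint v := by
  obtain rfl : w = fun i => (g : Matrix (Fin 2) (Fin 2) ℂ).mulVec (v i) := funext hw
  have hdet : ‖(g : Matrix (Fin 2) (Fin 2) ℂ).det‖ ≠ 0 :=
    norm_ne_zero_iff.mpr (Matrix.isUnit_iff_isUnit_det _ |>.mp g.isUnit).ne_zero
  rw [f4_mulVec, Jint_mulVec]
  field_simp

/-- `f(v₀,…,v₃)·∫_{Δ³} Q_v(t)^{-2} dt` is invariant under the action of `GL₂(ℂ)`. -/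
theorem f4_mul_Jint_GL_invariant (v : Fin 4 → Fin 2 → ℂ)
    (hv : ∀ i, v i ≠ 0)
    (hind : ∀ i j : Fin 4, i ≠ j → LinearIndependent ℂ ![v i, v j])
    (g : GL (Fin 2) ℂ) (w : Fin 4 → Fin 2 → ℂ)
    (hw : ∀ i, w i = (g : Matrix (Fin 2) (Fin 2) ℂ).mulVec (v i)) :
    f4 (w 0) (w 1) (w 2) (w 3) * Jint w = f4 (v 0) (v 1) (v 2) (v 3) * Jint v :=
  f4_mul_Jint_GL_invariant_general v g w hw
end
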